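/- Let d ≥ 1 be an integer, let Ω be a finite subset of ℝ^d, let H be a real inner product space, and let β > 0 and σ > 0. Define the normalization map φ ↦ φ̃ pointwise by φ̃(z) = φ(z)/‖φ(z)‖ if φ(z) ≠ 0 and φ̃(z) = 0 otherwise. Define, for functions φ, φ' : Ω → H, the single-layer convolutional kernel K(φ, φ') = Σ_{z ∈ Ω} Σ_{z' ∈ Ω} ‖φ(z)‖ · ‖φ'(z')‖ · exp(-‖z - z'‖²/(2β²)) · exp(-‖φ̃(z) - φ̃'(z')‖²/(2σ²)), where ‖z - z'‖ is the Euclidean norm on ℝ^d and the other norms are induced by the inner product on H. Then K is positive definite on the set of functions Ω → H: for every n, every φ_1, …, φ_n : Ω → H and every c_1, …, c_n ∈ ℝ, one has Σ_{i,j} c_i c_j K(φ_i, φ_j) ≥ 0. -/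

import Mathlib

open Real Classical

/-- Normalization map: `φ̃ = φ/‖φ‖` if `φ ≠ 0`, and `0` otherwise. -/
noncomputable def normalize' {H : Type*} [NormedAddCommGroup H] [InnerProductSpace ℝ H]
    (v : H) : H :=
  if v = 0 then 0 else ‖v‖⁻¹ • v

/-!
Index the data by pairs `(i, z)`. The double sum is then the quadratic form of the vector
`(i, z) ↦ cᵢ ‖φᵢ(z)‖` against the Hadamard product of two Gaussian kernel matrices, one on the
positions `z` and one on the normalized features `φ̃ᵢ(z)`; by the Schur product theorem it suffices
that Gaussian kernel matrices are positive semidefinite. Expanding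
`‖u - w‖² = ‖u‖² - 2⟪u, w⟫ + ‖w‖²` writes such a matrix as the rank-one rescaling of the entrywise
exponential of a multiple of a Gram matrix, and the entrywise exponential of a positive
semidefinite matrix is positive semidefinite: it is the sum of its Hadamard powers divided by `k!`.
-/

namespace Matrix

variable {ι : Type*}

theorem PosSemidef.sum_sum_mul_nonneg [Fintype ι] {A : Matrix ι ι ℝ} (hA : A.PosSemidef)
    (x : ι → ℝ) : 0 ≤ ∑ i, ∑ j, x i * x j * A i j := by
  simpa [dotProduct, mulVec, Finset.mul_sum, mul_comm, mul_left_comm]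
    using hA.dotProduct_mulVec_nonneg x

theorem posSemidef_ones : (of fun _ _ : ι => (1 : ℝ)).PosSemidef := by
  refine ⟨IsHermitian.ext fun _ _ => by simp, fun x => ?_⟩
  simp only [of_apply, mul_one, Finsupp.sum, ← Finset.mul_sum, ← Finset.sum_mul]
  exact mul_self_nonneg _

theorem PosSemidef.of_hasSum {κ : Type*} {A : κ → Matrix ι ι ℝ} {B : Matrix ι ι ℝ}
    (hA : ∀ k, (A k).PosSemidef) (h : HasSum A B) : B.PosSemidef := by
  have hentry (i j : ι) : HasSum (fun k => A k i j) (B i j) :=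
    Pi.hasSum.mp (Pi.hasSum.mp h i) j
  refine ⟨IsHermitian.ext fun i j => ?_, fun x => ?_⟩
  · have hstar := (hentry j i).star
    simp only [(hA _).isHermitian.apply] at hstar
    exact hstar.unique (hentry i j)
  · exact (hasSum_sum fun i _ => hasSum_sum fun j _ =>
      ((hentry i j).mul_left _).mul_right _).nonneg fun k => (hA k).2 x

theorem PosSemidef.map_pow {A : Matrix ι ι ℝ} (hA : A.PosSemidef) (k : ℕ) :
    (A.map (· ^ k)).PosSemidef := by
  induction k with
  | zero =>
    rw [show A.map (· ^ 0) = of fun _ _ => 1 by ext; simp]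
    exact posSemidef_ones
  | succ k ih =>
    rw [show A.map (· ^ (k + 1)) = A ⊙ A.map (· ^ k) by ext; simp [pow_succ']]
    exact hA.hadamard ih

theorem PosSemidef.map_exp {A : Matrix ι ι ℝ} (hA : A.PosSemidef) :
    (A.map Real.exp).PosSemidef := by
  refine of_hasSum (fun k => (hA.map_pow k).smul (by positivity : 0 ≤ (k.factorial : ℝ)⁻¹)) ?_
  refine Pi.hasSum.mpr fun i => Pi.hasSum.mpr fun j => ?_
  simpa [Real.exp_eq_exp_ℝ, div_eq_inv_mul] using NormedSpace.expSeries_div_hasSum_exp (A i j)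

theorem posSemidef_exp_neg_norm_sub_sq_div [Finite ι] {E : Type*} [NormedAddCommGroup E]
    [InnerProductSpace ℝ E] {s : ℝ} (hs : 0 ≤ s) (v : ι → E) :
    (of fun i j => Real.exp (-‖v i - v j‖ ^ 2 / s)).PosSemidef := by
  set a : ι → ℝ := fun i => Real.exp (-‖v i‖ ^ 2 / s)
  have hfactor : of (fun i j => Real.exp (-‖v i - v j‖ ^ 2 / s)) =
      ((2 / s) • gram ℝ v).map Real.exp ⊙ vecMulVec a (star a) := by
    ext i j
    simp only [of_apply, hadamard_apply, map_apply, smul_apply, gram_apply, vecMulVec_apply,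
      star_trivial, smul_eq_mul, a, ← Real.exp_add, norm_sub_sq_real]
    ring_nf
  rw [hfactor]
  exact (((posSemidef_gram ℝ v).smul (by positivity)).map_exp).hadamard
    (posSemidef_vecMulVec_self_star a)

end Matrix

theorem convolutional_kernel_single_layer_pos_def_general
    (d : ℕ) (Ω : Finset (EuclideanSpace ℝ (Fin d)))
    {H : Type*} [NormedAddCommGroup H] [InnerProductSpace ℝ H]
    (β σ : ℝ)
    (n : ℕ) (φ : Fin n → (Ω → H)) (c : Fin n → ℝ) :
    0 ≤ ∑ i, ∑ j, c i * c j *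
        (∑ z : Ω, ∑ z' : Ω,
          ‖φ i z‖ * ‖φ j z'‖ *
            Real.exp (-‖(z : EuclideanSpace ℝ (Fin d)) - (z' : EuclideanSpace ℝ (Fin d))‖ ^ 2
              / (2 * β ^ 2)) *
            Real.exp (-‖normalize' (φ i z) - normalize' (φ j z')‖ ^ 2 / (2 * σ ^ 2))) := by
  let position : Fin n × Ω → EuclideanSpace ℝ (Fin d) := fun p => p.2
  let direction : Fin n × Ω → H := fun p => normalize' (φ p.1 p.2)
  have hkernel :=
    (Matrix.posSemidef_exp_neg_norm_sub_sq_div (by positivity : 0 ≤ 2 * β ^ 2) position).hadamard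
      (Matrix.posSemidef_exp_neg_norm_sub_sq_div (by positivity : 0 ≤ 2 * σ ^ 2) direction)
  refine (hkernel.sum_sum_mul_nonneg fun p => c p.1 * ‖φ p.1 p.2‖).trans_eq ?_
  simp only [Fintype.sum_prod_type, Finset.mul_sum, Matrix.hadamard_apply, Matrix.of_apply,
    position, direction]
  refine Finset.sum_congr rfl fun i _ => ?_
  rw [Finset.sum_comm]
  refine Finset.sum_congr rfl fun z _ => Finset.sum_congr rfl fun j _ =>
    Finset.sum_congr rfl fun z' _ => ?_
  ring

/-- The one-layer convolutional kernel
`K(φ, φ') = Σ_{z,z' ∈ Ω} ‖φ(z)‖ ‖φ'(z')‖ exp(-‖z-z'‖²/(2β²)) exp(-‖φ̃(z)-φ̃'(z')‖²/(2σ²))`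
is positive definite on image feature maps `Ω → H`, where `Ω` is a finite subset of `ℝ^d`. -/
theorem convolutional_kernel_single_layer_pos_def
    (d : ℕ) (hd : 1 ≤ d) (Ω : Finset (EuclideanSpace ℝ (Fin d)))
    {H : Type*} [NormedAddCommGroup H] [InnerProductSpace ℝ H]
    (β σ : ℝ) (hβ : 0 < β) (hσ : 0 < σ)
    (n : ℕ) (φ : Fin n → (Ω → H)) (c : Fin n → ℝ) :
    0 ≤ ∑ i, ∑ j, c i * c j *
        (∑ z : Ω, ∑ z' : Ω,
          ‖φ i z‖ * ‖φ j z'‖ *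
            Real.exp (-‖(z : EuclideanSpace ℝ (Fin d)) - (z' : EuclideanSpace ℝ (Fin d))‖ ^ 2
              / (2 * β ^ 2)) *
            Real.exp (-‖normalize' (φ i z) - normalize' (φ j z')‖ ^ 2 / (2 * σ ^ 2))) :=
  convolutional_kernel_single_layer_pos_def_general d Ω β σ n φ c
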